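/- Let α, β, θ > 0 and λ ∈ [−1,1], and set c_k = (−1)^k[(1+λ)·C(θ,k) − λ·C(2θ,k)] for k ∈ ℕ. For all reals G > 0 and D, the series with k-th term (−c_{k+1})·(k+1)·α·β·G^{α−1}·D·exp(−(k+1)βG^α) converges (HasSum) to θαβ G^{α−1} D exp(−βG^α)(1 − exp(−βG^α))^{θ−1}[1 + λ − 2λ(1 − exp(−βG^α))^θ]. (With G = g(x) and D = g′(x), this expresses the GTLD density as the mixture f(x) = Σ_{k=0}^∞ d_{k+1} h_{k+1}(x) of the lifetime densities h_{k+1} with scale (k+1)β, where d_{k+1} = −c_{k+1}.) -/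

import Mathlib

/-!
The absorption identity `(k+1)·C(a,k+1) = a·C(a-1,k)` turns `∑ (-1)^k (k+1) C(a,k+1) u^(k+1)`
into `a·u·∑ C(a-1,k) (-u)^k = a·u·(1-u)^(a-1)` by Newton's binomial series, valid for `|u| < 1`.
Taking `a = θ` and `a = 2θ` at `u = exp(-β G^α) ∈ (0,1)` and splitting
`(1-u)^(2θ-1) = (1-u)^(θ-1) (1-u)^θ` gives the density.
-/

open Real

/-- Generalized binomial coefficient `C(a,k) = a(a−1)⋯(a−k+1)/k!`. -/
noncomputable def genChoose (a : ℝ) (k : ℕ) : ℝ :=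
  (∏ i ∈ Finset.range k, (a - i)) / (Nat.factorial k)

theorem genChoose_eq_ringChoose (a : ℝ) (k : ℕ) : genChoose a k = Ring.choose a k := by
  rw [Ring.choose_eq_smul, genChoose, smul_eq_mul, ← Polynomial.aeval_eq_smeval,
    Polynomial.aeval_def, ← Polynomial.eval_map, descPochhammer_map,
    descPochhammer_eval_eq_prod_range, div_eq_inv_mul]

theorem succ_mul_genChoose_succ (a : ℝ) (k : ℕ) :
    ((k : ℝ) + 1) * genChoose a (k + 1) = a * genChoose (a - 1) k := by
  simp only [genChoose, Finset.prod_range_succ', Nat.factorial_succ, Nat.cast_succ, ← sub_sub,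
    sub_right_comm a, Nat.cast_mul, CharP.cast_eq_zero, sub_zero]
  field_simp

theorem hasSum_genChoose_mul_pow (a : ℝ) {x : ℝ} (hx : |x| < 1) :
    HasSum (fun k ↦ genChoose a k * x ^ k) ((1 + x) ^ a) := by
  have hx' : x ∈ Metric.eball (0 : ℝ) 1 := by
    simpa [enorm_eq_nnnorm, ← NNReal.coe_lt_one] using hx
  simpa [genChoose_eq_ringChoose, binomialSeries, FormalMultilinearSeries.ofScalars_apply_eq,
    mul_comm] using Real.one_add_rpow_hasFPowerSeriesOnBall_zero.hasSum hx'

theorem hasSum_succ_mul_genChoose_succ_mul_pow (a : ℝ) {u : ℝ} (hu : |u| < 1) :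
    HasSum (fun k : ℕ ↦ (-1) ^ k * (((k : ℝ) + 1) * genChoose a (k + 1)) * u ^ (k + 1))
      (a * u * (1 - u) ^ (a - 1)) := by
  have h := (hasSum_genChoose_mul_pow (a - 1) (x := -u) (by rwa [abs_neg])).mul_left (a * u)
  rw [← sub_eq_add_neg] at h
  refine h.congr_fun fun k ↦ ?_
  rw [succ_mul_genChoose_succ, neg_pow]
  ring

theorem hasSum_transmuted_coeff_mul_pow (θ lam : ℝ) {u : ℝ} (hu : |u| < 1) :
    HasSum (fun k : ℕ ↦ -((-1) ^ (k + 1) *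
        ((1 + lam) * genChoose θ (k + 1) - lam * genChoose (2 * θ) (k + 1))) * ((k : ℝ) + 1) *
          u ^ (k + 1))
      (θ * u * (1 - u) ^ (θ - 1) * (1 + lam - 2 * lam * (1 - u) ^ θ)) := by
  have hu' : 0 < 1 - u := by linarith [le_abs_self u]
  have h := ((hasSum_succ_mul_genChoose_succ_mul_pow θ hu).mul_left (1 + lam)).sub
    ((hasSum_succ_mul_genChoose_succ_mul_pow (2 * θ) hu).mul_left lam)
  rw [show 2 * θ - 1 = (θ - 1) + θ by ring, rpow_add hu'] at h
  convert h.congr_fun (fun k ↦ ?_) using 1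
  · rfl
  · ring
  · ring

theorem gtld_pdf_mixture (α β θ lam : ℝ) (hβ : 0 < β) (G D : ℝ) (hG : 0 < G) :
    HasSum
      (fun k : ℕ =>
        (-((-1 : ℝ) ^ (k + 1) *
            ((1 + lam) * genChoose θ (k + 1) - lam * genChoose (2 * θ) (k + 1)))) *
          ((k : ℝ) + 1) * α * β * G ^ (α - 1) * D *
            Real.exp (-(((k : ℝ) + 1) * β * G ^ α)))
      (θ * α * β * G ^ (α - 1) * D * Real.exp (-β * G ^ α) *
        (1 - Real.exp (-β * G ^ α)) ^ (θ - 1) *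
        (1 + lam - 2 * lam * (1 - Real.exp (-β * G ^ α)) ^ θ)) := by
  set u := exp (-β * G ^ α)
  have hu : |u| < 1 := by
    rw [abs_of_pos (exp_pos _), exp_lt_one_iff, neg_mul, neg_lt_zero]
    exact mul_pos hβ (rpow_pos_of_pos hG α)
  have hexp (k : ℕ) : exp (-(((k : ℝ) + 1) * β * G ^ α)) = u ^ (k + 1) := by
    rw [← exp_nat_mul]
    congr 1
    push_cast
    ring
  have h := (hasSum_transmuted_coeff_mul_pow θ lam hu).mul_right (α * β * G ^ (α - 1) * D)
  convert h.congr_fun (fun k ↦ ?_) using 1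
  · rfl
  · ring
  · rw [hexp]
    ring
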